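/- Let S, T be trees, A a subset of the stumps of S and B a subset of the stumps of T. A broad relation f_1⋯f_k ≤ e in S ⊗ T is a broad relation in (S − v_A) ⊗ (T − v_B) if and only if e^{λ,(S−v_A)⊗(T−v_B)} ≤ f_1⋯f_k, where e^{λ,(S−v_A)⊗(T−v_B)} is the minimal tuple below e in (S−v_A)⊗(T−v_B). -/

import Mathlib

/-!
Let `λ(x)` be the product of the leaf tuples of the coordinates of `x` in `S − v_A` and
`T − v_B`. Along a relation `f₁ ⋯ fₖ ≤ e` of `(S − v_A) ⊗ (T − v_B)` the weight is additive,
`λ(f₁) + ⋯ + λ(fₖ) = λ(e)`, while along a relation of `S ⊗ T` it can only drop. Conversely, a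
relation of `S ⊗ T` along which it does not drop already holds in `(S − v_A) ⊗ (T − v_B)`:
it suffices to check this on generators `s̲ × t ≤ (s, t)`. If `t` has a nonempty leaf tuple it
cancels, and a relation `s̲ ≤ s` of `S` preserving leaf tuples never uses a deleted stump; if
the leaf tuple of `t` is empty then `ε ≤ t` in `T − v_B`, and every relation `s̲ ≤ s` of `S`
survives over `t` because deleted stumps can be replaced by `ε ≤ t`. Finally, if
`e^λ ≤ f₁ ⋯ fₖ` blockwise, additivity gives `∑ λ(fᵢ) = ∑ λ(e^λ) = λ(e)`.
-/

universe u

namespace BroadPaper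

/-- A broad relation on `X`: a relation between finite unordered tuples
(multisets) over `X` and elements of `X`. -/
abbrev Rel (X : Type u) : Type u := Multiset X → X → Prop

variable {X : Type u} {Y : Type u} {A : Type u} {B : Type u} {Z : Type u}

/-- Broad transitivity: if `f₁ ⋯ fₙ ≤ e` and `g̲ᵢ ≤ fᵢ` then `g̲₁ ⋯ g̲ₙ ≤ e`,
encoded via a multiset of pairs `(g̲ᵢ, fᵢ)`. -/
def BTrans (r : Rel X) : Prop :=
  ∀ (p : Multiset (Multiset X × X)) (e : X),
    r (p.map Prod.snd) e → (∀ q ∈ p, r q.1 q.2) → r ((p.map Prod.fst).sum) e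

/-- A pre-broad poset: reflexivity plus broad transitivity. -/
def IsPreBroad (r : Rel X) : Prop := (∀ e : X, r {e} e) ∧ BTrans r

/-- A (commutative) broad poset: a pre-broad poset satisfying antisymmetry. -/
def IsBroad (r : Rel X) : Prop :=
  IsPreBroad r ∧ ∀ e f : X, r {e} f → r {f} e → e = f

/-- Simplicity: letters in any broad relation are pairwise distinct. -/
def Simple (r : Rel X) : Prop := ∀ fs e, r fs e → fs.Nodup

/-- The descendant relation `f ≤_d e`. -/
def descends (r : Rel X) (f e : X) : Prop := ∃ fs, r fs e ∧ f ∈ fs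

def Comparable (r : Rel X) (f g : X) : Prop := descends r f g ∨ descends r g f

def Incomp (r : Rel X) (f g : X) : Prop := ¬ descends r f g ∧ ¬ descends r g f

/-- Blockwise extension of a broad relation to a relation between tuples:
`fs ≤ es` iff `fs = f̲₁ ⋯ f̲ₖ`, `es = e₁ ⋯ eₖ` with `f̲ᵢ ≤ eᵢ`. -/
def tupleLE (r : Rel X) (fs es : Multiset X) : Prop :=
  ∃ p : Multiset (Multiset X × X),
    p.map Prod.snd = es ∧ (p.map Prod.fst).sum = fs ∧ ∀ q ∈ p, r q.1 q.2

/-- A leaf: no tuple strictly below `e`. -/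
def IsLeaf (r : Rel X) (e : X) : Prop := ¬ ∃ fs, r fs e ∧ fs ≠ ({e} : Multiset X)

/-- `fs` is the maximum tuple strictly below `e` (written `e^↑`).
If `fs ≠ 0`, `e` is a node; if `fs = 0`, `e` is a stump. -/
def upTuple (r : Rel X) (e : X) (fs : Multiset X) : Prop :=
  (r fs e ∧ fs ≠ ({e} : Multiset X)) ∧
    ∀ gs, r gs e → gs ≠ ({e} : Multiset X) → tupleLE r gs fs

def IsStump (r : Rel X) (e : X) : Prop := upTuple r e 0

/-- A dendroidally ordered set (tree): a finite simple broad poset in which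
every element is a leaf, node or stump, with a `≤_d`-maximum (root). -/
def IsTree (r : Rel X) : Prop :=
  IsBroad r ∧ Finite X ∧ Simple r ∧
    (∀ e : X, IsLeaf r e ∨ ∃ fs, upTuple r e fs) ∧
    ∃ rt : X, ∀ e, descends r e rt

def IsMaxEl (r : Rel X) (e : X) : Prop := ∀ s, descends r e s → s = e

/-- A forestially ordered set (forest): each element has a unique
`≤_d`-maximal element above it. -/
def IsForest (r : Rel X) : Prop :=
  IsBroad r ∧ Finite X ∧ Simple r ∧
    (∀ e : X, IsLeaf r e ∨ ∃ fs, upTuple r e fs) ∧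
    ∀ e : X, ∃! rt : X, IsMaxEl r rt ∧ descends r e rt

/-- A map of broad posets: preserves broad relations (letterwise on tuples). -/
def BroadHom (r : Rel X) (r' : Rel Y) (φ : X → Y) : Prop :=
  ∀ fs e, r fs e → r' (fs.map φ) (φ e)

/-- `rs` is the root tuple: the tuple of `≤_d`-maximal elements (no repeats). -/
def IsRootTuple (r : Rel X) (rs : Multiset X) : Prop :=
  rs.Nodup ∧ ∀ x, x ∈ rs ↔ IsMaxEl r x

/-- Independent map of forests: `φ(r̲_F)·e̲ ≤ r̲_{F'}` for some tuple `e̲`. -/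
def Independent (r : Rel X) (r' : Rel Y) (φ : X → Y) : Prop :=
  ∃ (rs : Multiset X) (rs' : Multiset Y) (es : Multiset Y),
    IsRootTuple r rs ∧ IsRootTuple r' rs' ∧ tupleLE r' (rs.map φ + es) rs'

/-- The (pre-)broad relation generated by a set of generating relations:
closure under reflexivity and broad transitivity. -/
inductive GenRel (gen : Rel X) : Rel X
  | of : ∀ fs e, gen fs e → GenRel gen fs e
  | refl : ∀ e, GenRel gen {e} e
  | btrans : ∀ (p : Multiset (Multiset X × X)) (e : X),
      GenRel gen (p.map Prod.snd) e → (∀ q ∈ p, GenRel gen q.1 q.2) →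
      GenRel gen ((p.map Prod.fst).sum) e

/-- Generators of the tensor product `S ⊗ T`: relations `s̲ × t ≤ (s,t)` and
`s × t̲ ≤ (s,t)`. -/
def tensorGen (rS : Rel A) (rT : Rel B) : Rel (A × B) := fun xs x =>
  (∃ as, rS as x.1 ∧ xs = as.map fun a => (a, x.2)) ∨
  (∃ bs, rT bs x.2 ∧ xs = bs.map fun b => (x.1, b))

/-- The tensor product broad relation on `A × B`. -/
def tensorRel (rS : Rel A) (rT : Rel B) : Rel (A × B) := GenRel (tensorGen rS rT)

/-- Product of tuples: all pairs from `as` and `bs`. -/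
def mprod (as : Multiset A) (bs : Multiset B) : Multiset (A × B) :=
  as.bind fun a => bs.map fun b => (a, b)

end BroadPaper

namespace BroadPaper

/-- `S − v_A`: same edges as `S`, generated by the vertices of `S` with the
stump vertices `ε ≤ a`, `a ∈ A`, removed. -/
def delStumps {X : Type u} (r : Rel X) (As : Set X) : Rel X :=
  GenRel fun fs e => upTuple r e fs ∧ ¬ (e ∈ As ∧ fs = 0)

section GenRel

variable {X Y : Type u}

theorem GenRel.isPreBroad (gen : Rel X) : IsPreBroad (GenRel gen) :=
  ⟨GenRel.refl, GenRel.btrans⟩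

theorem GenRel.rel_of_isPreBroad {gen R : Rel X} (hR : IsPreBroad R)
    (h : ∀ fs e, gen fs e → R fs e) {fs : Multiset X} {e : X} (hfs : GenRel gen fs e) :
    R fs e := by
  induction hfs with
  | of fs e hg => exact h fs e hg
  | refl e => exact hR.1 e
  | btrans p e _ _ ihmid ihblocks => exact hR.2 p e ihmid ihblocks

theorem IsPreBroad.comap {R : Rel Y} (hR : IsPreBroad R) (φ : X → Y) :
    IsPreBroad fun fs e => R (fs.map φ) (φ e) := by
  refine ⟨fun e => by simpa using hR.1 (φ e), fun p e hmid hblocks => ?_⟩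
  have hsnd : (p.map fun q => (q.1.map φ, φ q.2)).map Prod.snd = (p.map Prod.snd).map φ := by
    simp only [Multiset.map_map]; rfl
  have hfst : ((p.map Prod.fst).sum).map φ =
      ((p.map fun q => (q.1.map φ, φ q.2)).map Prod.fst).sum := by
    rw [Multiset.map_map]
    exact (Multiset.map_join φ _).trans (by rw [Multiset.map_map]; rfl)
  show R _ (φ e)
  rw [hfst]
  refine hR.2 _ (φ e) (hsnd ▸ hmid) ?_
  simp only [Multiset.mem_map]
  rintro _ ⟨q, hq, rfl⟩
  exact hblocks q hq

theorem GenRel.broadHom {gen : Rel X} {R : Rel Y} (hR : IsPreBroad R) (φ : X → Y)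
    (h : ∀ fs e, gen fs e → R (fs.map φ) (φ e)) : BroadHom (GenRel gen) R φ :=
  fun _ _ => GenRel.rel_of_isPreBroad (hR.comap φ) h

section Weight

variable {M : Type*} [AddCommMonoid M]

theorem sum_map_sum_map_fst (p : Multiset (Multiset X × X)) (w : X → M) :
    (((p.map Prod.fst).sum).map w).sum = (p.map fun q => (q.1.map w).sum).sum := by
  induction p using Multiset.induction_on <;> simp_all

theorem isPreBroad_sum_map_eq (w : X → M) : IsPreBroad fun fs e => (fs.map w).sum = w e := by
  refine ⟨fun e => by simp, fun p e hmid hblocks => ?_⟩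
  show _ = _
  rw [sum_map_sum_map_fst, Multiset.map_congr rfl hblocks, ← hmid, Multiset.map_map]
  rfl

theorem sum_map_eq_of_tupleLE {R : Rel X} {w : X → M}
    (hR : ∀ fs e, R fs e → (fs.map w).sum = w e) {gs fs : Multiset X} (h : tupleLE R gs fs) :
    (gs.map w).sum = (fs.map w).sum := by
  obtain ⟨p, rfl, rfl, hp⟩ := h
  rw [sum_map_sum_map_fst, Multiset.map_congr rfl fun q hq => hR q.1 q.2 (hp q hq),
    Multiset.map_map]
  rfl

variable [PartialOrder M] [IsOrderedCancelAddMonoid M]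

theorem sum_map_eq_sum_map_iff_of_le {ι : Type*} {s : Multiset ι} {f g : ι → M}
    (h : ∀ i ∈ s, f i ≤ g i) :
    (s.map f).sum = (s.map g).sum ↔ ∀ i ∈ s, f i = g i := by
  induction s using Multiset.induction_on with
  | empty => simp
  | cons a s ih =>
    simp only [Multiset.forall_mem_cons] at h ⊢
    rw [Multiset.map_cons, Multiset.map_cons, Multiset.sum_cons, Multiset.sum_cons,
      add_eq_add_iff_eq_and_eq h.1 (Multiset.sum_map_le_sum_map _ _ h.2), ih h.2]

theorem isPreBroad_sum_map_le (w : X → M) : IsPreBroad fun fs e => (fs.map w).sum ≤ w e := by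
  refine ⟨fun e => by simp, fun p e hmid hblocks => ?_⟩
  show _ ≤ _
  rw [sum_map_sum_map_fst]
  refine (Multiset.sum_map_le_sum_map _ (w ∘ Prod.snd) hblocks).trans ?_
  simpa [Multiset.map_map] using hmid

theorem GenRel.of_sum_map_eq {gen gen' : Rel X} (w : X → M)
    (hle : ∀ fs e, gen fs e → (fs.map w).sum ≤ w e)
    (hgen : ∀ fs e, gen fs e → (fs.map w).sum = w e → GenRel gen' fs e)
    {fs : Multiset X} {e : X} (h : GenRel gen fs e) (hw : (fs.map w).sum = w e) :
    GenRel gen' fs e := by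
  let R : Rel X := fun fs e =>
    (fs.map w).sum ≤ w e ∧ ((fs.map w).sum = w e → GenRel gen' fs e)
  suffices hR : IsPreBroad R from
    (GenRel.rel_of_isPreBroad hR (fun fs e hg => ⟨hle fs e hg, hgen fs e hg⟩) h).2 hw
  refine ⟨fun e => ⟨by simp, fun _ => GenRel.refl e⟩, fun p e ⟨hmid_le, hmid⟩ hblocks => ?_⟩
  have hsnd : (p.map fun q => w q.2).sum = ((p.map Prod.snd).map w).sum := by
    rw [Multiset.map_map]; rfl
  have hblocks_le : (p.map fun q => (q.1.map w).sum).sum ≤ (p.map fun q => w q.2).sum :=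
    Multiset.sum_map_le_sum_map _ _ fun q hq => (hblocks q hq).1
  show _ ∧ _
  rw [sum_map_sum_map_fst]
  refine ⟨hblocks_le.trans (hsnd ▸ hmid_le), fun heq => ?_⟩
  -- equality at the end of `∑ blocks ≤ ∑ w q.2 ≤ w e` forces equality at every step
  have hmid_eq : ((p.map Prod.snd).map w).sum = w e :=
    le_antisymm hmid_le (heq ▸ hsnd ▸ hblocks_le)
  have hblocks_eq := (sum_map_eq_sum_map_iff_of_le fun q hq => (hblocks q hq).1).1
    (heq.trans (hsnd.trans hmid_eq).symm)
  exact GenRel.btrans p e (hmid hmid_eq) fun q hq => (hblocks q hq).2 (hblocks_eq q hq)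

end Weight

end GenRel


section Order

variable {X : Type u} {r : Rel X}

theorem IsPreBroad.sum_map {fs : Multiset X} {e : X} (hr : IsPreBroad r) (h : r fs e)
    {g : X → Multiset X} (hg : ∀ u ∈ fs, r (g u) u) : r (fs.map g).sum e := by
  have := hr.2 (fs.map fun u => (g u, u)) e (by simpa [Multiset.map_map] using h)
    (by simpa using hg)
  simpa [Multiset.map_map] using this

theorem IsPreBroad.subst (hr : IsPreBroad r) {xs ys : Multiset X} {x z : X} (hxs : r xs x)
    (hys : r (x ::ₘ ys) z) : r (xs + ys) z := by
  have := hr.2 ((xs, x) ::ₘ ys.map fun y => ({y}, y)) z (by simpa [Multiset.map_map] using hys)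
    (by simpa using ⟨hxs, fun y _ => hr.1 y⟩)
  simpa [Multiset.map_map] using this

theorem descends_refl (hr : IsPreBroad r) (e : X) : descends r e e :=
  ⟨{e}, hr.1 e, Multiset.mem_singleton_self e⟩

theorem descends_trans (hr : IsPreBroad r) {x y z : X} (hxy : descends r x y)
    (hyz : descends r y z) : descends r x z := by
  obtain ⟨xs, hxs, hx⟩ := hxy
  obtain ⟨ys, hys, hy⟩ := hyz
  obtain ⟨ys, rfl⟩ := Multiset.exists_cons_of_mem hy
  exact ⟨xs + ys, hr.subst hxs hys, Multiset.mem_add.2 (Or.inl hx)⟩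

theorem eq_singleton_of_mem (hr : IsPreBroad r) (hs : Simple r) {ys : Multiset X} {a : X}
    (h : r ys a) (ha : a ∈ ys) : ys = {a} := by
  obtain ⟨ys, rfl⟩ := Multiset.exists_cons_of_mem ha
  have hnd : (a ::ₘ ys + ys).Nodup := hs _ _ (hr.subst h h)
  rw [Multiset.eq_zero_of_forall_notMem fun y hy =>
    Multiset.disjoint_left.1 (Multiset.nodup_add.1 hnd).2.2 (Multiset.mem_cons_of_mem hy) hy]
  rfl

theorem descends_antisymm (hr : IsBroad r) (hs : Simple r) {x y : X} (hxy : descends r x y)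
    (hyx : descends r y x) : x = y := by
  obtain ⟨xs, hxs, hx⟩ := hxy
  obtain ⟨ys, hys, hy⟩ := hyx
  obtain ⟨xs, rfl⟩ := Multiset.exists_cons_of_mem hx
  obtain ⟨ys, rfl⟩ := Multiset.exists_cons_of_mem hy
  have hsingle : y ::ₘ ys + xs = {y} :=
    eq_singleton_of_mem hr.1 hs (hr.1.subst hys hxs)
      (Multiset.mem_add.2 (Or.inl (Multiset.mem_cons_self y ys)))
  rw [Multiset.cons_add, ← Multiset.cons_zero, Multiset.cons_inj_right,
    add_eq_zero] at hsingle
  obtain ⟨rfl, rfl⟩ := hsingle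
  exact hr.2 x y hxs hys

theorem eq_of_descends_of_descends (hr : IsPreBroad r) (hs : Simple r) {bs : Multiset X}
    {u x x' z : X} (hb : r bs u) (hx : x ∈ bs) (hx' : x' ∈ bs) (hzx : descends r z x)
    (hzx' : descends r z x') : x = x' := by
  by_contra hne
  obtain ⟨bs, rfl⟩ := Multiset.exists_cons_of_mem hx
  obtain ⟨bs, rfl⟩ :=
    Multiset.exists_cons_of_mem ((Multiset.mem_cons.1 hx').resolve_left (Ne.symm hne))
  obtain ⟨zs, hzs, hz⟩ := hzx
  obtain ⟨zs', hzs', hz'⟩ := hzx'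
  have hnd : (zs' + (zs + bs)).Nodup :=
    hs _ _ (hr.subst hzs' (by simpa [Multiset.cons_add] using hr.subst hzs hb))
  exact Multiset.disjoint_left.1 (Multiset.nodup_add.1 hnd).2.2 hz' (Multiset.mem_add.2 (Or.inl hz))

theorem exists_descends_of_tupleLE {gs fs : Multiset X} {x : X} (h : tupleLE r gs fs)
    (hx : x ∈ gs) : ∃ y ∈ fs, descends r x y := by
  obtain ⟨p, rfl, rfl, hp⟩ := h
  obtain ⟨_, hqp, hxq⟩ := Multiset.mem_join.1 hx
  obtain ⟨q, hq, rfl⟩ := Multiset.mem_map.1 hqp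
  exact ⟨q.2, Multiset.mem_map_of_mem _ hq, q.1, hp q hq, hxq⟩

theorem upTuple_unique (hr : IsBroad r) (hs : Simple r) {a : X} {fs fs' : Multiset X}
    (h : upTuple r a fs) (h' : upTuple r a fs') : fs = fs' := by
  have hsub : ∀ {gs gs'}, upTuple r a gs → upTuple r a gs' → ∀ x ∈ gs, x ∈ gs' := by
    intro gs gs' hg hg' x hx
    obtain ⟨y, hy, hxy⟩ := exists_descends_of_tupleLE (hg'.2 gs hg.1.1 hg.1.2) hx
    obtain ⟨x', hx', hyx'⟩ := exists_descends_of_tupleLE (hg.2 gs' hg'.1.1 hg'.1.2) hy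
    obtain rfl : x = x' := eq_of_descends_of_descends hr.1 hs hg.1.1 hx hx'
      (descends_refl hr.1 x) (descends_trans hr.1 hxy hyx')
    exact descends_antisymm hr hs hxy hyx' ▸ hy
  exact (Multiset.Nodup.ext (hs _ _ h.1.1) (hs _ _ h'.1.1)).2 fun x => ⟨hsub h h' x, hsub h' h x⟩

end Order

section Tree

variable {X : Type u} {r : Rel X}

noncomputable def numDescendants (r : Rel X) (a : X) : ℕ := {x | descends r x a}.ncard

theorem IsTree.numDescendants_lt (hS : IsTree r) {a u : X} {fs : Multiset X}
    (h : upTuple r a fs) (hu : u ∈ fs) : numDescendants r u < numDescendants r a := by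
  have : Finite X := hS.2.1
  have hua : descends r u a := ⟨fs, h.1.1, hu⟩
  refine Set.ncard_lt_ncard ((Set.ssubset_iff_of_subset fun x hx =>
    descends_trans hS.1.1 hx hua).2 ⟨a, descends_refl hS.1.1 a, fun hau => ?_⟩) (Set.toFinite _)
  obtain rfl := descends_antisymm hS.1 hS.2.2.1 hau hua
  exact h.1.2 (eq_singleton_of_mem hS.1.1 hS.2.2.1 h.1.1 hu)

theorem IsTree.induction (hS : IsTree r) {P : X → Prop}
    (h : ∀ a, (∀ fs, upTuple r a fs → ∀ u ∈ fs, P u) → P a) (a : X) : P a :=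
  (InvImage.wf (numDescendants r) wellFounded_lt).induction a fun a ih =>
    h a fun _ hfs _ hu => ih _ (hS.numDescendants_lt hfs hu)

theorem IsTree.genRel_upTuple (hS : IsTree r) {gs : Multiset X} {a : X} (h : r gs a) :
    GenRel (fun fs e => upTuple r e fs) gs a := by
  induction a using hS.induction generalizing gs with
  | h a ih =>
    by_cases hgs : gs = {a}
    · exact hgs ▸ GenRel.refl a
    obtain hleaf | ⟨fs, hfs⟩ := hS.2.2.2.1 a
    · exact absurd ⟨gs, h, hgs⟩ hleaf
    obtain ⟨p, hsnd, rfl, hp⟩ := hfs.2 gs h hgs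
    refine GenRel.btrans p a (hsnd ▸ GenRel.of fs a hfs) fun q hq => ?_
    exact ih fs hfs q.2 (hsnd ▸ Multiset.mem_map_of_mem _ hq) (hp q hq)

end Tree

section LeafTuple

variable {X : Type u} {r : Rel X} {As : Set X}

def delStumpsGen (r : Rel X) (As : Set X) : Rel X :=
  fun fs e => upTuple r e fs ∧ ¬ (e ∈ As ∧ fs = 0)

/-- The leaf tuple of `a` in `S − v_A`. In a tree the guard on `numDescendants` always holds;
it is there only to make the recursion well founded. -/
noncomputable def leafTuple (r : Rel X) (As : Set X) (a : X) : Multiset X :=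
  open Classical in
  if h : ∃ fs, delStumpsGen r As fs a then
    (h.choose.map fun u =>
      if numDescendants r u < numDescendants r a then leafTuple r As u else {u}).sum
  else {a}
termination_by numDescendants r a

theorem leafTuple_of_delStumpsGen (hS : IsTree r) {a : X} {fs : Multiset X}
    (h : delStumpsGen r As fs a) : leafTuple r As a = (fs.map (leafTuple r As)).sum := by
  have hex : ∃ fs, delStumpsGen r As fs a := ⟨fs, h⟩
  rw [leafTuple, dif_pos hex, upTuple_unique hS.1 hS.2.2.1 hex.choose_spec.1 h.1]
  exact congrArg _ (Multiset.map_congr rfl fun u hu => if_pos (hS.numDescendants_lt h.1 hu))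

theorem leafTuple_of_not_delStumpsGen {a : X} (h : ¬ ∃ fs, delStumpsGen r As fs a) :
    leafTuple r As a = {a} := by
  rw [leafTuple, dif_neg h]

theorem leafTuple_of_isStump (hS : IsTree r) {a : X} (h : IsStump r a) (ha : a ∈ As) :
    leafTuple r As a = {a} :=
  leafTuple_of_not_delStumpsGen fun ⟨_, hfs⟩ =>
    hfs.2 ⟨ha, upTuple_unique hS.1 hS.2.2.1 hfs.1 h⟩

theorem delStumps_leafTuple (hS : IsTree r) (a : X) : delStumps r As (leafTuple r As a) a := by
  induction a using hS.induction with
  | h a ih =>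
    by_cases hex : ∃ fs, delStumpsGen r As fs a
    · obtain ⟨fs, hfs⟩ := hex
      rw [leafTuple_of_delStumpsGen hS hfs]
      exact (GenRel.isPreBroad _).sum_map (GenRel.of fs a hfs) (ih fs hfs.1)
    · rw [leafTuple_of_not_delStumpsGen hex]
      exact GenRel.refl a

theorem sum_leafTuple_le_of_upTuple (hS : IsTree r) {a : X} {fs : Multiset X}
    (h : upTuple r a fs) : (fs.map (leafTuple r As)).sum ≤ leafTuple r As a := by
  by_cases hc : a ∈ As ∧ fs = 0
  · simp [hc.2]
  · exact (leafTuple_of_delStumpsGen hS ⟨h, hc⟩).ge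

theorem sum_leafTuple_le (hS : IsTree r) {gs : Multiset X} {a : X} (h : r gs a) :
    (gs.map (leafTuple r As)).sum ≤ leafTuple r As a :=
  GenRel.rel_of_isPreBroad (isPreBroad_sum_map_le _)
    (fun _ _ hfs => sum_leafTuple_le_of_upTuple hS hfs) (hS.genRel_upTuple h)

theorem sum_leafTuple_eq (hS : IsTree r) {gs : Multiset X} {a : X} (h : delStumps r As gs a) :
    (gs.map (leafTuple r As)).sum = leafTuple r As a :=
  GenRel.rel_of_isPreBroad (isPreBroad_sum_map_eq _)
    (fun _ _ hfs => (leafTuple_of_delStumpsGen hS hfs).symm) h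

theorem delStumps_of_sum_leafTuple_eq (hS : IsTree r) {gs : Multiset X} {a : X} (h : r gs a)
    (heq : (gs.map (leafTuple r As)).sum = leafTuple r As a) : delStumps r As gs a := by
  refine GenRel.of_sum_map_eq _ (fun _ _ hfs => sum_leafTuple_le_of_upTuple hS hfs)
    (fun fs e hfs hfse => ?_) (hS.genRel_upTuple h) heq
  by_cases hc : e ∈ As ∧ fs = 0
  · obtain ⟨he, rfl⟩ := hc
    simp [leafTuple_of_isStump hS hfs he] at hfse
  · exact GenRel.of fs e ⟨hfs, hc⟩

end LeafTuple

section Product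

variable {A B : Type u}

theorem sum_product (S : Multiset (Multiset A)) (t : Multiset B) :
    S.sum ×ˢ t = (S.map (· ×ˢ t)).sum := by
  induction S using Multiset.induction_on <;> simp_all

theorem product_sum (s : Multiset A) (T : Multiset (Multiset B)) :
    s ×ˢ T.sum = (T.map (s ×ˢ ·)).sum := by
  induction T using Multiset.induction_on <;> simp_all

theorem product_le_product_left {s s' : Multiset A} (t : Multiset B) (h : s ≤ s') :
    s ×ˢ t ≤ s' ×ˢ t := by
  obtain ⟨d, rfl⟩ := Multiset.le_iff_exists_add.1 h
  simp

theorem product_le_product_right (s : Multiset A) {t t' : Multiset B} (h : t ≤ t') :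
    s ×ˢ t ≤ s ×ˢ t' := by
  obtain ⟨d, rfl⟩ := Multiset.le_iff_exists_add.1 h
  simp

theorem map_fst_product (s : Multiset A) (t : Multiset B) :
    (s ×ˢ t).map Prod.fst = Multiset.card t • s := by
  induction s using Multiset.induction_on with
  | empty => simp
  | cons a s ih =>
    rw [Multiset.cons_product, Multiset.map_add, ih, ← Multiset.singleton_add, nsmul_add,
      Multiset.nsmul_singleton, Multiset.map_map]
    simp

theorem map_snd_product (s : Multiset A) (t : Multiset B) :
    (s ×ˢ t).map Prod.snd = Multiset.card s • t := by
  induction s using Multiset.induction_on <;> simp_all [succ_nsmul']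

theorem product_left_cancel {s s' : Multiset A} {t : Multiset B} (ht : t ≠ 0)
    (h : s ×ˢ t = s' ×ˢ t) : s = s' := by
  have := congrArg (Multiset.map Prod.fst) h
  rw [map_fst_product, map_fst_product] at this
  exact nsmul_right_injective (mt Multiset.card_eq_zero.1 ht) this

theorem product_right_cancel {s : Multiset A} {t t' : Multiset B} (hs : s ≠ 0)
    (h : s ×ˢ t = s ×ˢ t') : t = t' := by
  have := congrArg (Multiset.map Prod.snd) h
  rw [map_snd_product, map_snd_product] at this
  exact nsmul_right_injective (mt Multiset.card_eq_zero.1 hs) this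

end Product

section Tensor

variable {A B : Type u} {rS : Rel A} {rT : Rel B} {As : Set A} {Bs : Set B}

noncomputable def tensorLeafTuple (rS : Rel A) (rT : Rel B) (As : Set A) (Bs : Set B)
    (x : A × B) : Multiset (A × B) :=
  leafTuple rS As x.1 ×ˢ leafTuple rT Bs x.2

theorem sum_tensorLeafTuple_map_left (as : Multiset A) (b : B) :
    ((as.map fun a => (a, b)).map (tensorLeafTuple rS rT As Bs)).sum =
      (as.map (leafTuple rS As)).sum ×ˢ leafTuple rT Bs b := by
  rw [Multiset.map_map, sum_product, Multiset.map_map]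
  rfl

theorem sum_tensorLeafTuple_map_right (a : A) (bs : Multiset B) :
    ((bs.map fun b => (a, b)).map (tensorLeafTuple rS rT As Bs)).sum =
      leafTuple rS As a ×ˢ (bs.map (leafTuple rT Bs)).sum := by
  rw [Multiset.map_map, product_sum, Multiset.map_map]
  rfl

theorem tensorRel_map_left_of_delStumps_zero (hS : IsTree rS) {as : Multiset A} {a : A} {b : B}
    (hb : delStumps rT Bs 0 b) (h : rS as a) :
    tensorRel (delStumps rS As) (delStumps rT Bs) (as.map fun a => (a, b)) (a, b) := by
  refine GenRel.broadHom (GenRel.isPreBroad _) (fun a => (a, b)) (fun fs e hfs => ?_) _ _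
    (hS.genRel_upTuple h)
  by_cases hc : e ∈ As ∧ fs = 0
  · rw [hc.2, Multiset.map_zero]
    exact GenRel.of _ _ (Or.inr ⟨0, hb, rfl⟩)
  · exact GenRel.of _ _ (Or.inl ⟨fs, GenRel.of fs e ⟨hfs, hc⟩, rfl⟩)

theorem tensorRel_map_right_of_delStumps_zero (hT : IsTree rT) {bs : Multiset B} {a : A} {b : B}
    (ha : delStumps rS As 0 a) (h : rT bs b) :
    tensorRel (delStumps rS As) (delStumps rT Bs) (bs.map fun b => (a, b)) (a, b) := by
  refine GenRel.broadHom (GenRel.isPreBroad _) (fun b => (a, b)) (fun fs e hfs => ?_) _ _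
    (hT.genRel_upTuple h)
  by_cases hc : e ∈ Bs ∧ fs = 0
  · rw [hc.2, Multiset.map_zero]
    exact GenRel.of _ _ (Or.inl ⟨0, ha, rfl⟩)
  · exact GenRel.of _ _ (Or.inr ⟨fs, GenRel.of fs e ⟨hfs, hc⟩, rfl⟩)

variable (hS : IsTree rS) (hT : IsTree rT)
include hS hT

theorem sum_tensorLeafTuple_le_of_tensorGen {fs : Multiset (A × B)} {x : A × B}
    (h : tensorGen rS rT fs x) :
    (fs.map (tensorLeafTuple rS rT As Bs)).sum ≤ tensorLeafTuple rS rT As Bs x := by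
  obtain ⟨as, has, rfl⟩ | ⟨bs, hbs, rfl⟩ := h
  · rw [sum_tensorLeafTuple_map_left]
    exact product_le_product_left _ (sum_leafTuple_le hS has)
  · rw [sum_tensorLeafTuple_map_right]
    exact product_le_product_right _ (sum_leafTuple_le hT hbs)

theorem sum_tensorLeafTuple_eq {fs : Multiset (A × B)} {x : A × B}
    (h : tensorRel (delStumps rS As) (delStumps rT Bs) fs x) :
    (fs.map (tensorLeafTuple rS rT As Bs)).sum = tensorLeafTuple rS rT As Bs x := by
  refine GenRel.rel_of_isPreBroad (isPreBroad_sum_map_eq _) (fun fs x hfs => ?_) h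
  obtain ⟨as, has, rfl⟩ | ⟨bs, hbs, rfl⟩ := hfs
  · rw [sum_tensorLeafTuple_map_left, sum_leafTuple_eq hS has]; rfl
  · rw [sum_tensorLeafTuple_map_right, sum_leafTuple_eq hT hbs]; rfl

theorem tensorRel_delStumps_of_tensorGen {fs : Multiset (A × B)} {x : A × B}
    (h : tensorGen rS rT fs x)
    (heq : (fs.map (tensorLeafTuple rS rT As Bs)).sum = tensorLeafTuple rS rT As Bs x) :
    tensorRel (delStumps rS As) (delStumps rT Bs) fs x := by
  obtain ⟨as, has, rfl⟩ | ⟨bs, hbs, rfl⟩ := h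
  · by_cases hb : leafTuple rT Bs x.2 = 0
    · exact tensorRel_map_left_of_delStumps_zero hS (hb ▸ delStumps_leafTuple hT x.2) has
    rw [sum_tensorLeafTuple_map_left] at heq
    exact GenRel.of _ _
      (Or.inl ⟨as, delStumps_of_sum_leafTuple_eq hS has (product_left_cancel hb heq), rfl⟩)
  · by_cases ha : leafTuple rS As x.1 = 0
    · exact tensorRel_map_right_of_delStumps_zero hT (ha ▸ delStumps_leafTuple hS x.1) hbs
    rw [sum_tensorLeafTuple_map_right] at heq
    exact GenRel.of _ _
      (Or.inr ⟨bs, delStumps_of_sum_leafTuple_eq hT hbs (product_right_cancel ha heq), rfl⟩)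

theorem tensorRel_delStumps_of_sum_eq {fs : Multiset (A × B)} {x : A × B}
    (h : tensorRel rS rT fs x)
    (heq : (fs.map (tensorLeafTuple rS rT As Bs)).sum = tensorLeafTuple rS rT As Bs x) :
    tensorRel (delStumps rS As) (delStumps rT Bs) fs x :=
  GenRel.of_sum_map_eq _ (fun _ _ => sum_tensorLeafTuple_le_of_tensorGen hS hT)
    (fun _ _ => tensorRel_delStumps_of_tensorGen hS hT) h heq

end Tensor

theorem stmt18_general {A B : Type u} (rS : Rel A) (rT : Rel B)
    (hS : IsTree rS) (hT : IsTree rT)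
    (As : Set A) (Bs : Set B)
    (e : A × B) (lamE : Multiset (A × B))
    (hlam : tensorRel (delStumps rS As) (delStumps rT Bs) lamE e ∧
      ∀ gs, tensorRel (delStumps rS As) (delStumps rT Bs) gs e →
        tupleLE (tensorRel (delStumps rS As) (delStumps rT Bs)) lamE gs)
    (fs : Multiset (A × B)) (hfs : tensorRel rS rT fs e) :
    tensorRel (delStumps rS As) (delStumps rT Bs) fs e ↔
      tupleLE (tensorRel (delStumps rS As) (delStumps rT Bs)) lamE fs := by
  refine ⟨hlam.2 fs, fun hle => tensorRel_delStumps_of_sum_eq hS hT hfs ?_⟩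
  rw [← sum_map_eq_of_tupleLE (fun _ _ => sum_tensorLeafTuple_eq hS hT) hle]
  exact sum_tensorLeafTuple_eq hS hT hlam.1

/-- For subsets `A`, `B` of the stumps of `S`, `T`, a broad
relation `f₁ ⋯ fₖ ≤ e` of `S ⊗ T` holds in `(S − v_A) ⊗ (T − v_B)` iff
`e^{λ,(S−v_A)⊗(T−v_B)} ≤ f₁ ⋯ fₖ`. -/
theorem stmt18 {A B : Type u} (rS : Rel A) (rT : Rel B)
    (hS : IsTree rS) (hT : IsTree rT)
    (As : Set A) (Bs : Set B)
    (hAs : ∀ a ∈ As, IsStump rS a) (hBs : ∀ b ∈ Bs, IsStump rT b)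
    (e : A × B) (lamE : Multiset (A × B))
    (hlam : tensorRel (delStumps rS As) (delStumps rT Bs) lamE e ∧
      ∀ gs, tensorRel (delStumps rS As) (delStumps rT Bs) gs e →
        tupleLE (tensorRel (delStumps rS As) (delStumps rT Bs)) lamE gs)
    (fs : Multiset (A × B)) (hfs : tensorRel rS rT fs e) :
    tensorRel (delStumps rS As) (delStumps rT Bs) fs e ↔
      tupleLE (tensorRel (delStumps rS As) (delStumps rT Bs)) lamE fs :=
  stmt18_general rS rT hS hT As Bs e lamE hlam fs hfs

end BroadPaper
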